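/- Let α ∈ (−1, −1/2) be fixed and set l_α := |α+1/2|/(4(α+1)(α+2)) and L_α := 1/((α+1)(α+2)). Then for every u' ∈ [0,1], l_α·ρ_{α+2}(u') ≤ ∫_{u'}^1 |Π_α(u)| du ≤ L_α·ρ_{α+2}(u'), where ρ_{α+2}(u') := (Γ(α+3)/(√π·Γ(α+5/2)))·((1−u')(1+u'))^{α+3/2}. -/

import Mathlib

open Real

/-- The function `Π_α(u)` for `α ∈ (-1, -1/2)`. -/
noncomputable def PiFun (α u : ℝ) : ℝ :=
  Real.Gamma (α + 1) / (Real.sqrt π * Real.Gamma (α + 1/2)) *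
    ∫ w in (0 : ℝ)..u, (1 - w ^ 2) ^ (α - 1/2)

/-- The density `ρ_{α+2}` of the measure `dΠ_{α+2}`. -/
noncomputable def rhoFun (α u : ℝ) : ℝ :=
  Real.Gamma (α + 3) / (Real.sqrt π * Real.Gamma (α + 5/2)) * ((1 - u) * (1 + u)) ^ (α + 3/2)

/-! For `r = α - 1/2 ≤ 0` and `0 ≤ w < 1` one has `2^r (1-w)^r ≤ (1-w²)^r ≤ (1-w)^r`, so
`|Π_α(u)|`, a positive multiple of `∫₀ᵘ (1-w²)^r`, is squeezed between multiples of
`(1-u)^(α+1/2)` (up to an additive constant in the lower bound). Integrating over `[u', 1]`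
bounds the tail integral by multiples of `(1-u')^(α+3/2)`, the lower bound after using
`1-u' ≤ (1-u')^(α+3/2)`. The density `ρ_{α+2}(u')` is the same power times
`(1+u')^(α+3/2) ∈ [1, 2^(α+3/2)]`, and by `Γ(s+1) = s Γ(s)` its normalising constant is that
of `Π_α` times `(α+1)(α+2)/((α+3/2)(α+1/2))`. -/

open MeasureTheory Set intervalIntegral
open scoped Interval

lemma Gamma_neg_of_neg_one_lt_of_neg {s : ℝ} (hs1 : -1 < s) (hs : s < 0) : Gamma s < 0 := by
  have h := Gamma_pos_of_pos (show 0 < s + 1 by linarith)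
  rw [Gamma_add_one hs.ne] at h
  exact neg_of_mul_pos_right h hs.le

lemma Gamma_add_two {s : ℝ} (h0 : s ≠ 0) (h1 : s + 1 ≠ 0) :
    Gamma (s + 2) = (s + 1) * s * Gamma s := by
  rw [show s + 2 = s + 1 + 1 by ring, Gamma_add_one h1, Gamma_add_one h0, mul_assoc]

lemma zero_notMem_uIcc_one_sub {a b : ℝ} (h : (1 : ℝ) ∉ [[a, b]]) :
    (0 : ℝ) ∉ [[1 - a, 1 - b]] := by
  rwa [← preimage_const_sub_uIcc, mem_preimage, sub_zero]

lemma intervalIntegrable_one_sub_rpow {a b r : ℝ} (h : -1 < r ∨ (1 : ℝ) ∉ [[a, b]]) :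
    IntervalIntegrable (fun w => (1 - w) ^ r) volume a b := by
  have h' : IntervalIntegrable (fun x => x ^ r) volume (1 - a) (1 - b) :=
    h.elim intervalIntegrable_rpow' fun h1 =>
      intervalIntegrable_rpow (Or.inr (zero_notMem_uIcc_one_sub h1))
  simpa using h'.comp_sub_left 1

lemma integral_one_sub_rpow {a b r : ℝ} (h : -1 < r ∨ r ≠ -1 ∧ (1 : ℝ) ∉ [[a, b]]) :
    ∫ w in a..b, (1 - w) ^ r = ((1 - a) ^ (r + 1) - (1 - b) ^ (r + 1)) / (r + 1) := by
  rw [integral_comp_sub_left (fun x => x ^ r),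
    integral_rpow (h.imp_right (And.imp_right fun h1 =>
      uIcc_comm (1 - a) _ ▸ zero_notMem_uIcc_one_sub h1))]

lemma integral_one_sub_rpow_to_one {a r : ℝ} (hr : -1 < r) :
    ∫ w in a..1, (1 - w) ^ r = (1 - a) ^ (r + 1) / (r + 1) := by
  rw [integral_one_sub_rpow (Or.inl hr), sub_self, zero_rpow (by linarith), sub_zero]

lemma integral_zero_one_sub_rpow {r u : ℝ} (hr : r ≠ -1) (hu : u < 1) :
    ∫ w in 0..u, (1 - w) ^ r = (1 - (1 - u) ^ (r + 1)) / (r + 1) := by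
  rw [integral_one_sub_rpow (Or.inr ⟨hr, notMem_uIcc_of_gt one_pos hu⟩), sub_zero, one_rpow]

section Primitive

variable {r : ℝ}

lemma one_sub_sq_rpow_le_one_sub_rpow (hr : r ≤ 0) {w : ℝ} (hw0 : 0 ≤ w) (hw1 : w < 1) :
    (1 - w ^ 2) ^ r ≤ (1 - w) ^ r :=
  rpow_le_rpow_of_nonpos (by linarith) (by nlinarith) hr

lemma two_rpow_mul_one_sub_rpow_le_one_sub_sq_rpow (hr : r ≤ 0) {w : ℝ} (hw0 : 0 ≤ w)
    (hw1 : w < 1) : 2 ^ r * (1 - w) ^ r ≤ (1 - w ^ 2) ^ r := by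
  rw [← mul_rpow zero_le_two (by linarith)]
  exact rpow_le_rpow_of_nonpos (by nlinarith) (by nlinarith) hr

lemma intervalIntegrable_one_sub_sq_rpow {a b : ℝ} (ha : a ∈ Ioo (-1) 1)
    (hb : b ∈ Ioo (-1) 1) :
    IntervalIntegrable (fun w => (1 - w ^ 2) ^ r) volume a b := by
  refine (ContinuousOn.rpow_const (by fun_prop) fun w hw => Or.inl ?_).intervalIntegrable
  have : w ∈ Ioo (-1) 1 := by
    rcases mem_uIcc.1 hw with h | h <;> constructor <;>
      linarith [ha.1, ha.2, hb.1, hb.2, h.1, h.2]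
  nlinarith [this.1, this.2]

lemma integral_one_sub_sq_rpow_nonneg {u : ℝ} (hu0 : 0 ≤ u) (hu1 : u ≤ 1) :
    0 ≤ ∫ w in 0..u, (1 - w ^ 2) ^ r :=
  integral_nonneg hu0 fun w hw => rpow_nonneg (by nlinarith [hw.1, hw.2]) r

lemma monotoneOn_integral_one_sub_sq_rpow :
    MonotoneOn (fun u => ∫ w in 0..u, (1 - w ^ 2) ^ r) (Ico 0 1) := fun x hx y hy hxy =>
  integral_mono_interval le_rfl hx.1 hxy
    ((ae_restrict_iff' measurableSet_Ioc).2 <| ae_of_all _ fun w hw =>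
      rpow_nonneg (by nlinarith [hw.1, hw.2, hy.2]) r)
    (intervalIntegrable_one_sub_sq_rpow ⟨by norm_num, by norm_num⟩
      ⟨by linarith [hy.1], hy.2⟩)

lemma integral_one_sub_sq_rpow_le (hr : r ≤ 0) (hr1 : r ≠ -1) {u : ℝ} (hu0 : 0 ≤ u)
    (hu1 : u < 1) : ∫ w in 0..u, (1 - w ^ 2) ^ r ≤ (1 - (1 - u) ^ (r + 1)) / (r + 1) := by
  rw [← integral_zero_one_sub_rpow hr1 hu1]
  exact integral_mono_on hu0
    (intervalIntegrable_one_sub_sq_rpow ⟨by norm_num, by norm_num⟩ ⟨by linarith, hu1⟩)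
    (intervalIntegrable_one_sub_rpow (Or.inr (notMem_uIcc_of_gt one_pos hu1)))
    fun w hw => one_sub_sq_rpow_le_one_sub_rpow hr hw.1 (hw.2.trans_lt hu1)

lemma two_rpow_mul_le_integral_one_sub_sq_rpow (hr : r ≤ 0) (hr1 : r ≠ -1) {u : ℝ}
    (hu0 : 0 ≤ u) (hu1 : u < 1) :
    2 ^ r * ((1 - (1 - u) ^ (r + 1)) / (r + 1)) ≤ ∫ w in 0..u, (1 - w ^ 2) ^ r := by
  rw [← integral_zero_one_sub_rpow hr1 hu1, ← intervalIntegral.integral_const_mul]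
  exact integral_mono_on hu0
    ((intervalIntegrable_one_sub_rpow (Or.inr (notMem_uIcc_of_gt one_pos hu1))).const_mul _)
    (intervalIntegrable_one_sub_sq_rpow ⟨by norm_num, by norm_num⟩ ⟨by linarith, hu1⟩)
    fun w hw => two_rpow_mul_one_sub_rpow_le_one_sub_sq_rpow hr hw.1 (hw.2.trans_lt hu1)

lemma integral_one_sub_sq_rpow_le_of_lt_neg_one (hr : r < -1) {u : ℝ} (hu0 : 0 ≤ u)
    (hu1 : u < 1) : ∫ w in 0..u, (1 - w ^ 2) ^ r ≤ (1 - u) ^ (r + 1) / -(r + 1) := by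
  refine (integral_one_sub_sq_rpow_le (by linarith) hr.ne hu0 hu1).trans ?_
  rw [div_neg, ← neg_div]
  exact div_le_div_of_nonpos_of_le (by linarith)
    (by linarith [rpow_nonneg (sub_nonneg.2 hu1.le) (r + 1)])

lemma intervalIntegrable_integral_one_sub_sq_rpow (hr : r ∈ Ioo (-2) (-1)) {a : ℝ}
    (ha0 : 0 ≤ a) (ha1 : a ≤ 1) :
    IntervalIntegrable (fun u => ∫ w in 0..u, (1 - w ^ 2) ^ r) volume a 1 := by
  rw [intervalIntegrable_iff_integrableOn_Ioo_of_le ha1]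
  have hdom : IntervalIntegrable (fun u => (1 - u) ^ (r + 1) / -(r + 1)) volume a 1 :=
    (intervalIntegrable_one_sub_rpow (Or.inl (by linarith [hr.1]))).div_const _
  refine Integrable.mono' ((intervalIntegrable_iff_integrableOn_Ioo_of_le ha1).1 hdom)
    (aemeasurable_restrict_of_monotoneOn measurableSet_Ioo
      (monotoneOn_integral_one_sub_sq_rpow.mono fun u hu =>
        ⟨ha0.trans hu.1.le, hu.2⟩)).aestronglyMeasurable
    ((ae_restrict_iff' measurableSet_Ioo).2 <| ae_of_all _ fun u hu => ?_)
  have hu0 : 0 ≤ u := ha0.trans hu.1.le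
  rw [norm_of_nonneg (integral_one_sub_sq_rpow_nonneg hu0 hu.2.le)]
  exact integral_one_sub_sq_rpow_le_of_lt_neg_one hr.2 hu0 hu.2

lemma integral_integral_one_sub_sq_rpow_le (hr : r ∈ Ioo (-2) (-1)) {a : ℝ} (ha0 : 0 ≤ a)
    (ha1 : a ≤ 1) :
    ∫ u in a..1, ∫ w in 0..u, (1 - w ^ 2) ^ r ≤ (1 - a) ^ (r + 2) / ((r + 2) * -(r + 1)) := by
  have hdom : IntervalIntegrable (fun u => (1 - u) ^ (r + 1) / -(r + 1)) volume a 1 :=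
    (intervalIntegrable_one_sub_rpow (Or.inl (by linarith [hr.1]))).div_const _
  refine (integral_mono_on_of_le_Ioo ha1 (intervalIntegrable_integral_one_sub_sq_rpow hr ha0 ha1)
    hdom fun u hu =>
      integral_one_sub_sq_rpow_le_of_lt_neg_one hr.2 (ha0.trans hu.1.le) hu.2).trans_eq ?_
  rw [intervalIntegral.integral_div, integral_one_sub_rpow_to_one (by linarith [hr.1]), div_div]
  ring_nf

lemma two_rpow_mul_le_integral_integral_one_sub_sq_rpow (hr : r ∈ Ioo (-2) (-1)) {a : ℝ}
    (ha0 : 0 ≤ a) (ha1 : a ≤ 1) :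
    2 ^ r * ((1 - a) ^ (r + 2) / (r + 2)) ≤ ∫ u in a..1, ∫ w in 0..u, (1 - w ^ 2) ^ r := by
  have hint :
      IntervalIntegrable (fun u => 2 ^ r * ((1 - (1 - u) ^ (r + 1)) / (r + 1))) volume a 1 :=
    ((intervalIntegrable_const.sub (intervalIntegrable_one_sub_rpow
      (Or.inl (by linarith [hr.1])))).div_const _).const_mul _
  refine le_trans ?_ (integral_mono_on_of_le_Ioo ha1 hint
    (intervalIntegrable_integral_one_sub_sq_rpow hr ha0 ha1) fun u hu =>
      two_rpow_mul_le_integral_one_sub_sq_rpow (by linarith [hr.2]) hr.2.ne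
        (ha0.trans hu.1.le) hu.2)
  rw [intervalIntegral.integral_const_mul, intervalIntegral.integral_div,
    intervalIntegral.integral_sub intervalIntegrable_const
      (intervalIntegrable_one_sub_rpow (Or.inl (by linarith [hr.1]))),
    integral_one_sub_rpow_to_one (by linarith [hr.1]), intervalIntegral.integral_const,
    smul_eq_mul, mul_one, show r + 1 + 1 = r + 2 by ring]
  refine mul_le_mul_of_nonneg_left ?_ (rpow_nonneg zero_le_two r)
  rw [le_div_iff_of_neg (by linarith [hr.2])]
  have hp : r + 2 ≠ 0 := by linarith [hr.1]
  have hsplit : (1 - a) ^ (r + 2) / (r + 2) * (r + 1) =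
      (1 - a) ^ (r + 2) - (1 - a) ^ (r + 2) / (r + 2) := by
    field_simp
    ring
  linarith [self_le_rpow_of_le_one (sub_nonneg.2 ha1) (by linarith)
    (show r + 2 ≤ 1 by linarith [hr.2])]

end Primitive

lemma Gamma_div_sqrt_pi_mul_Gamma_neg {α : ℝ} (hα : α ∈ Ioo (-1) (-1/2)) :
    Gamma (α + 1) / (√π * Gamma (α + 1/2)) < 0 :=
  div_neg_of_pos_of_neg (Gamma_pos_of_pos (by linarith [hα.1])) <| mul_neg_of_pos_of_neg
    (sqrt_pos.2 pi_pos) (Gamma_neg_of_neg_one_lt_of_neg (by linarith [hα.1]) (by linarith [hα.2]))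

lemma abs_PiFun {α u : ℝ} (hα : α ∈ Ioo (-1) (-1/2)) (hu0 : 0 ≤ u) (hu1 : u ≤ 1) :
    |PiFun α u| = -(Gamma (α + 1) / (√π * Gamma (α + 1/2))) *
      ∫ w in 0..u, (1 - w ^ 2) ^ (α - 1/2) := by
  rw [PiFun, abs_mul, abs_of_neg (Gamma_div_sqrt_pi_mul_Gamma_neg hα),
    abs_of_nonneg (integral_one_sub_sq_rpow_nonneg hu0 hu1)]

lemma integral_abs_PiFun {α a : ℝ} (hα : α ∈ Ioo (-1) (-1/2)) (ha0 : 0 ≤ a)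
    (ha1 : a ≤ 1) :
    ∫ u in a..1, |PiFun α u| = -(Gamma (α + 1) / (√π * Gamma (α + 1/2))) *
      ∫ u in a..1, ∫ w in 0..u, (1 - w ^ 2) ^ (α - 1/2) := by
  rw [← intervalIntegral.integral_const_mul]
  refine integral_congr fun u hu => ?_
  rw [uIcc_of_le ha1] at hu
  exact abs_PiFun hα (ha0.trans hu.1) hu.2

lemma rhoFun_eq {α : ℝ} (hα : α ∈ Ioo (-1) (-1/2)) (u : ℝ) :
    rhoFun α u = (α + 1) * (α + 2) / ((α + 3/2) * |α + 1/2|) *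
      -(Gamma (α + 1) / (√π * Gamma (α + 1/2))) * ((1 - u) * (1 + u)) ^ (α + 3/2) := by
  obtain ⟨h1, h2⟩ := hα
  have hG : Gamma (α + 1/2) ≠ 0 :=
    (Gamma_neg_of_neg_one_lt_of_neg (by linarith) (by linarith)).ne
  have hπ : √π ≠ 0 := (sqrt_pos.2 pi_pos).ne'
  rw [rhoFun, show α + 3 = α + 1 + 2 by ring, Gamma_add_two (by linarith) (by linarith),
    show α + 5/2 = α + 1/2 + 2 by ring, Gamma_add_two (by linarith) (by linarith)]
  rw [abs_of_neg (by linarith)]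
  have : α + 1/2 ≠ 0 := by linarith
  have : α + 1/2 + 1 ≠ 0 := by linarith
  have : α + 3/2 ≠ 0 := by linarith
  field_simp
  ring

lemma mul_rhoFun_le_integral_abs_PiFun {α a : ℝ} (hα : α ∈ Ioo (-1) (-1/2)) (ha0 : 0 ≤ a)
    (ha1 : a ≤ 1) :
    |α + 1/2| / (4 * (α + 1) * (α + 2)) * rhoFun α a ≤ ∫ u in a..1, |PiFun α u| := by
  obtain ⟨h1, h2⟩ := hα
  have hlow := two_rpow_mul_le_integral_integral_one_sub_sq_rpow (r := α - 1/2)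
    ⟨by linarith, by linarith⟩ ha0 ha1
  rw [show α - 1/2 + 2 = α + 3/2 by ring] at hlow
  have hY : (1 + a) ^ (α + 3/2) ≤ 2 ^ (α - 1/2) * 4 := by
    calc (1 + a) ^ (α + 3/2) ≤ 2 ^ (α + 3/2) :=
          rpow_le_rpow (by linarith) (by linarith) (by linarith)
      _ = 2 ^ (α - 1/2) * 4 := by
        rw [show α + 3/2 = α - 1/2 + 2 by ring, rpow_add two_pos]
        norm_num
  have hm : 0 < (α + 1) * (α + 2) := mul_pos (by linarith) (by linarith)
  have hc : 0 ≤ |α + 1/2| / (4 * (α + 1) * (α + 2)) := div_nonneg (abs_nonneg _) (by linarith)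
  have hK := neg_pos.2 (Gamma_div_sqrt_pi_mul_Gamma_neg ⟨h1, h2⟩)
  have hp : 0 < α + 3/2 := by linarith
  have hq : 0 < |α + 1/2| := abs_pos.2 (by linarith)
  have hX : 0 ≤ (1 - a) ^ (α + 3/2) := rpow_nonneg (by linarith) _
  rw [integral_abs_PiFun ⟨h1, h2⟩ ha0 ha1, rhoFun_eq ⟨h1, h2⟩,
    mul_rpow (by linarith) (by linarith)]
  -- Abstract the atoms, so that `field_simp` below cannot rewrite `α + 1/2` inside `|·|`.
  generalize -(Gamma (α + 1) / (√π * Gamma (α + 1/2))) = K at hK ⊢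
  generalize ∫ u in a..1, ∫ w in 0..u, (1 - w ^ 2) ^ (α - 1/2) = I at hlow ⊢
  generalize (1 - a) ^ (α + 3/2) = X at hX hlow ⊢
  generalize (1 + a) ^ (α + 3/2) = Y at hY ⊢
  generalize α + 3/2 = p at hp hlow ⊢
  generalize |α + 1/2| = q at hq hc ⊢
  have : α + 1 ≠ 0 := by linarith
  have : α + 2 ≠ 0 := by linarith
  calc q / (4 * (α + 1) * (α + 2)) * ((α + 1) * (α + 2) / (p * q) * K * (X * Y))
      ≤ q / (4 * (α + 1) * (α + 2)) *
        ((α + 1) * (α + 2) / (p * q) * K * (X * (2 ^ (α - 1/2) * 4))) := by gcongr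
    _ = K * (2 ^ (α - 1/2) * (X / p)) := by field_simp
    _ ≤ K * I := by gcongr

lemma integral_abs_PiFun_le_mul_rhoFun {α a : ℝ} (hα : α ∈ Ioo (-1) (-1/2)) (ha0 : 0 ≤ a)
    (ha1 : a ≤ 1) :
    ∫ u in a..1, |PiFun α u| ≤ 1 / ((α + 1) * (α + 2)) * rhoFun α a := by
  obtain ⟨h1, h2⟩ := hα
  have hup := integral_integral_one_sub_sq_rpow_le (r := α - 1/2)
    ⟨by linarith, by linarith⟩ ha0 ha1
  rw [show α - 1/2 + 2 = α + 3/2 by ring,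
    show -(α - 1/2 + 1) = |α + 1/2| by rw [abs_of_neg (by linarith)]; ring] at hup
  have hY : 1 ≤ (1 + a) ^ (α + 3/2) := one_le_rpow (by linarith) (by linarith)
  have hK := neg_pos.2 (Gamma_div_sqrt_pi_mul_Gamma_neg ⟨h1, h2⟩)
  have hm : 0 < (α + 1) * (α + 2) := mul_pos (by linarith) (by linarith)
  have hX : 0 ≤ (1 - a) ^ (α + 3/2) := rpow_nonneg (by linarith) _
  rw [integral_abs_PiFun ⟨h1, h2⟩ ha0 ha1, rhoFun_eq ⟨h1, h2⟩,
    mul_rpow (by linarith) (by linarith)]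
  generalize -(Gamma (α + 1) / (√π * Gamma (α + 1/2))) = K at hK ⊢
  generalize ∫ u in a..1, ∫ w in 0..u, (1 - w ^ 2) ^ (α - 1/2) = I at hup ⊢
  generalize (1 - a) ^ (α + 3/2) = X at hX hup ⊢
  have hpq : 0 < (α + 3/2) * |α + 1/2| := mul_pos (by linarith) (abs_pos.2 (by linarith))
  generalize (α + 3/2) * |α + 1/2| = pq at hpq hup ⊢
  have : α + 1 ≠ 0 := by linarith
  have : α + 2 ≠ 0 := by linarith
  calc K * I ≤ K * (X / pq) := by gcongr
    _ = 1 / ((α + 1) * (α + 2)) * ((α + 1) * (α + 2) / pq * K * X) := by field_simp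
    _ ≤ 1 / ((α + 1) * (α + 2)) *
        ((α + 1) * (α + 2) / pq * K * (X * (1 + a) ^ (α + 3/2))) := by
        gcongr
        exact le_mul_of_one_le_right hX hY

theorem PiFun_tail_integral_density_bounds (α : ℝ) (hα : α ∈ Set.Ioo (-1 : ℝ) (-1/2))
    (u' : ℝ) (hu' : u' ∈ Set.Icc (0 : ℝ) 1) :
    |α + 1/2| / (4 * (α + 1) * (α + 2)) * rhoFun α u' ≤ ∫ u in u'..1, |PiFun α u| ∧
    (∫ u in u'..1, |PiFun α u|) ≤ 1 / ((α + 1) * (α + 2)) * rhoFun α u' :=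
  ⟨mul_rhoFun_le_integral_abs_PiFun hα hu'.1 hu'.2,
    integral_abs_PiFun_le_mul_rhoFun hα hu'.1 hu'.2⟩
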